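/- arXiv:1903.00150 — 3 statements merged into one kernel-verified Lean document; each statement's English description precedes it below -/
import Mathlib

section
/- Let $w_1,w_2,w_3,w_4$ and $d$ be positive real numbers with $I:= w_1+w_2+w_3+w_4-d>0$, and set $W_i = 2w_i/I$ and $D = 2d/I$. Then for $H(s)=\frac{1-e^{-Ds}}{\prod_{i=1}^{4}(1-e^{-W_i s})}$ one has $a_0 := \lim_{s\to0^+} s^{3}H(s) = \frac{d\,(w_1+w_2+w_3+w_4-d)^{3}}{8\,w_1 w_2 w_3 w_4}$, and moreover $\lim_{s\to0^+}s^{2}\bigl(H(s)-a_0 s^{-3}\bigr) = a_0$ (i.e. $a_0 = a_1$). -/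
/-! With `φ(x) = (1 - e^{-x})/x`, which is differentiable at `0` with `φ(0) = 1` and
`φ'(0) = -1/2`, the Hilbert series factors as `s³ H(s) = a₀ F(s)` with
`F(s) = φ(D s) / ∏ φ(Wᵢ s)`. Thus `F(0) = 1` and `F'(0) = (∑ Wᵢ - D)/2`, which the charge-two
normalization makes equal to `1`. Hence `s³ H(s) → a₀`, and
`s² (H(s) - a₀ s⁻³) = a₀ (F(s) - 1)/s → a₀ F'(0) = a₀`. -/

open Filter Real Set Topology

noncomputable def oneSubExpNegDiv (x : ℝ) : ℝ := if x = 0 then 1 else (1 - exp (-x)) / x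

lemma oneSubExpNegDiv_zero : oneSubExpNegDiv 0 = 1 := if_pos rfl

lemma oneSubExpNegDiv_of_ne_zero {x : ℝ} (hx : x ≠ 0) :
    oneSubExpNegDiv x = (1 - exp (-x)) / x :=
  if_neg hx

lemma mul_oneSubExpNegDiv (x : ℝ) : x * oneSubExpNegDiv x = 1 - exp (-x) := by
  rcases eq_or_ne x 0 with rfl | hx
  · simp
  · rw [oneSubExpNegDiv_of_ne_zero hx, mul_div_cancel₀ _ hx]

lemma abs_oneSubExpNegDiv_sub_le {x : ℝ} (hx : |x| ≤ 1) :
    |oneSubExpNegDiv x - (1 - x / 2)| ≤ x ^ 2 := by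
  rcases eq_or_ne x 0 with rfl | hx0
  · simp [oneSubExpNegDiv_zero]
  have htaylor := Real.exp_bound (x := -x) (by rwa [abs_neg]) (n := 3) three_pos
  simp only [Finset.sum_range_succ, Finset.sum_range_zero, abs_neg] at htaylor
  norm_num [Nat.factorial] at htaylor
  have hx' : 0 < |x| := abs_pos.mpr hx0
  rw [oneSubExpNegDiv_of_ne_zero hx0, ← sq_abs, ← mul_le_mul_iff_of_pos_right hx',
    ← abs_mul, show ((1 - exp (-x)) / x - (1 - x / 2)) * x = -(exp (-x) - (1 + -x + x ^ 2 / 2))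
      by field_simp; ring, abs_neg]
  nlinarith [pow_nonneg hx'.le 3]

lemma hasDerivAt_oneSubExpNegDiv_zero : HasDerivAt oneSubExpNegDiv (-(1 / 2)) 0 := by
  rw [hasDerivAt_iff_isLittleO]
  have hO : (fun x => oneSubExpNegDiv x - oneSubExpNegDiv 0 - (x - 0) • (-(1 / 2) : ℝ))
      =O[𝓝 0] fun x => x ^ 2 := by
    refine Asymptotics.IsBigO.of_bound 1 ?_
    filter_upwards [Metric.closedBall_mem_nhds (0 : ℝ) one_pos] with x hx
    rw [Metric.mem_closedBall, Real.dist_eq, sub_zero] at hx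
    simp only [oneSubExpNegDiv_zero, sub_zero, smul_eq_mul, Real.norm_eq_abs, one_mul, norm_pow,
      sq_abs]
    convert abs_oneSubExpNegDiv_sub_le hx using 2
    ring
  exact hO.trans_isLittleO (by simpa using Asymptotics.isLittleO_pow_id (𝕜 := ℝ) one_lt_two)

lemma hasDerivAt_oneSubExpNegDiv_const_mul (c : ℝ) :
    HasDerivAt (fun s => oneSubExpNegDiv (c * s)) (-(c / 2)) 0 := by
  have hφ : HasDerivAt oneSubExpNegDiv (-(1 / 2)) (c * 0) := by
    rw [mul_zero]; exact hasDerivAt_oneSubExpNegDiv_zero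
  exact (hφ.comp 0 ((hasDerivAt_id' 0).const_mul c)).congr_deriv (by ring)

lemma tendsto_laurent_leading_coeffs {l : Filter ℝ} (hl : l ≤ 𝓝[≠] 0) {F H : ℝ → ℝ} {a c : ℝ}
    {n : ℕ} (hF : HasDerivAt F c 0) (hF0 : F 0 = 1)
    (hH : ∀ᶠ s in l, s ^ (n + 1) * H s = a * F s) :
    Tendsto (fun s => s ^ (n + 1) * H s) l (𝓝 a) ∧
      Tendsto (fun s => s ^ n * (H s - a / s ^ (n + 1))) l (𝓝 (a * c)) := by
  constructor
  · have hFl : Tendsto F l (𝓝 1) :=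
      hF0 ▸ hF.continuousAt.tendsto.mono_left (hl.trans nhdsWithin_le_nhds)
    simpa using (tendsto_const_nhds.mul hFl).congr' (hH.mono fun s hs => hs.symm)
  · have hslope := (hasDerivAt_iff_tendsto_slope.mp hF).mono_left hl
    refine (tendsto_const_nhds.mul hslope).congr' ?_
    filter_upwards [hH, hl self_mem_nhdsWithin] with s hs hs_mem
    have hs0 : s ≠ 0 := hs_mem
    rw [slope_def_field, hF0, sub_zero]
    field_simp
    linear_combination (-s ^ (n + 1)) * hs

section HilbertSeries

variable {ι : Type*} [Fintype ι]

noncomputable def hilbertSeries (D : ℝ) (W : ι → ℝ) (s : ℝ) : ℝ :=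
  (1 - exp (-D * s)) / ∏ i, (1 - exp (-W i * s))

noncomputable def regularizedHilbertSeries (D : ℝ) (W : ι → ℝ) (s : ℝ) : ℝ :=
  oneSubExpNegDiv (D * s) / ∏ i, oneSubExpNegDiv (W i * s)

lemma hilbertSeries_eq_mul_regularizedHilbertSeries (D : ℝ) (W : ι → ℝ) (s : ℝ) :
    hilbertSeries D W s = D * s / (∏ i, W i * s) * regularizedHilbertSeries D W s := by
  simp only [hilbertSeries, regularizedHilbertSeries, neg_mul, ← mul_oneSubExpNegDiv,
    Finset.prod_mul_distrib, div_mul_div_comm]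

lemma pow_mul_hilbertSeries {n : ℕ} (hn : Fintype.card ι = n + 1) (D : ℝ) (W : ι → ℝ) {s : ℝ}
    (hs : s ≠ 0) :
    s ^ n * hilbertSeries D W s = (D / ∏ i, W i) * regularizedHilbertSeries D W s := by
  rw [hilbertSeries_eq_mul_regularizedHilbertSeries, Finset.prod_mul_pow_card.symm,
    Finset.card_univ, hn, ← mul_assoc, mul_div_assoc', pow_succ]
  congr 1
  rw [show s ^ n * (D * s) = D * (s ^ n * s) by ring, mul_div_mul_right _ _ (by positivity)]

lemma regularizedHilbertSeries_zero (D : ℝ) (W : ι → ℝ) : regularizedHilbertSeries D W 0 = 1 := by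
  simp [regularizedHilbertSeries, oneSubExpNegDiv_zero]

lemma hasDerivAt_regularizedHilbertSeries (D : ℝ) (W : ι → ℝ) :
    HasDerivAt (regularizedHilbertSeries D W) (((∑ i, W i) - D) / 2) 0 := by
  classical
  have hden : HasDerivAt (fun s => ∏ i, oneSubExpNegDiv (W i * s)) (∑ i, -(W i / 2)) 0 := by
    refine (HasDerivAt.fun_finsetProd fun i _ =>
      hasDerivAt_oneSubExpNegDiv_const_mul (W i)).congr_deriv ?_
    simp [oneSubExpNegDiv_zero]
  refine ((hasDerivAt_oneSubExpNegDiv_const_mul D).div hden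
    (by simp [oneSubExpNegDiv_zero])).congr_deriv ?_
  simp only [mul_zero, oneSubExpNegDiv_zero, Finset.prod_const_one, Finset.sum_neg_distrib,
    ← Finset.sum_div]
  ring

end HilbertSeries

theorem hypersurface_hilbert_a0_eq_a1_general
    (w₁ w₂ w₃ w₄ d : ℝ)
    (I : ℝ) (hI : I = w₁ + w₂ + w₃ + w₄ - d) (hIpos : 0 < I)
    (H : ℝ → ℝ)
    (hH : ∀ s : ℝ, 0 < s →
      H s = (1 - Real.exp (-(2 * d / I) * s)) /
        ((1 - Real.exp (-(2 * w₁ / I) * s)) * (1 - Real.exp (-(2 * w₂ / I) * s)) *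
         (1 - Real.exp (-(2 * w₃ / I) * s)) * (1 - Real.exp (-(2 * w₄ / I) * s))))
    (a₀ : ℝ) (ha₀ : a₀ = d * (w₁ + w₂ + w₃ + w₄ - d) ^ 3 / (8 * w₁ * w₂ * w₃ * w₄)) :
    Filter.Tendsto (fun s : ℝ => s ^ 3 * H s) (nhdsWithin 0 (Set.Ioi 0)) (nhds a₀)
      ∧ Filter.Tendsto (fun s : ℝ => s ^ 2 * (H s - a₀ / s ^ 3))
          (nhdsWithin 0 (Set.Ioi 0)) (nhds a₀) := by
  set D := 2 * d / I
  set W : Fin 4 → ℝ := ![2 * w₁ / I, 2 * w₂ / I, 2 * w₃ / I, 2 * w₄ / I]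
  have ha₀W : a₀ = D / ∏ i, W i := by
    simp only [ha₀, D, W, ← hI, Fin.prod_univ_four, Matrix.cons_val_zero, Matrix.cons_val_one,
      Matrix.cons_val]
    field_simp
    ring
  have hslope : ((∑ i, W i) - D) / 2 = 1 := by
    simp only [D, W, Fin.sum_univ_four, Matrix.cons_val_zero, Matrix.cons_val_one,
      Matrix.cons_val]
    field_simp
    linarith
  have hHW : ∀ᶠ s in 𝓝[>] 0, s ^ 3 * H s = a₀ * regularizedHilbertSeries D W s := by
    filter_upwards [self_mem_nhdsWithin] with s hs
    rw [ha₀W, ← pow_mul_hilbertSeries (Fintype.card_fin 4) D W (ne_of_gt hs), hH s hs]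
    simp [hilbertSeries, W, Fin.prod_univ_four, mul_assoc]
  simpa [hslope] using tendsto_laurent_leading_coeffs (nhdsGT_le_nhdsNE 0)
    (hasDerivAt_regularizedHilbertSeries D W) (regularizedHilbertSeries_zero D W) hHW

/-- For a hypersurface singularity with weights `w₁,…,w₄` and degree `d`, normalized so that
the canonical form has charge two (`Wᵢ = 2wᵢ/I`, `D = 2d/I` with `I = ∑wᵢ - d > 0`), the
Hilbert series `H(s) = (1 - e^{-Ds})/∏(1 - e^{-Wᵢ s})` satisfies
`a₀ = lim_{s→0⁺} s³ H(s) = d(∑wᵢ - d)³/(8 w₁w₂w₃w₄)` and `a₁ = lim_{s→0⁺} s²(H(s)-a₀ s⁻³) = a₀`. -/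
theorem hypersurface_hilbert_a0_eq_a1
    (w₁ w₂ w₃ w₄ d : ℝ) (hw₁ : 0 < w₁) (hw₂ : 0 < w₂) (hw₃ : 0 < w₃) (hw₄ : 0 < w₄)
    (hd : 0 < d) (I : ℝ) (hI : I = w₁ + w₂ + w₃ + w₄ - d) (hIpos : 0 < I)
    (H : ℝ → ℝ)
    (hH : ∀ s : ℝ, 0 < s →
      H s = (1 - Real.exp (-(2 * d / I) * s)) /
        ((1 - Real.exp (-(2 * w₁ / I) * s)) * (1 - Real.exp (-(2 * w₂ / I) * s)) *
         (1 - Real.exp (-(2 * w₃ / I) * s)) * (1 - Real.exp (-(2 * w₄ / I) * s))))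
    (a₀ : ℝ) (ha₀ : a₀ = d * (w₁ + w₂ + w₃ + w₄ - d) ^ 3 / (8 * w₁ * w₂ * w₃ * w₄)) :
    Filter.Tendsto (fun s : ℝ => s ^ 3 * H s) (nhdsWithin 0 (Set.Ioi 0)) (nhds a₀)
      ∧ Filter.Tendsto (fun s : ℝ => s ^ 2 * (H s - a₀ / s ^ 3))
          (nhdsWithin 0 (Set.Ioi 0)) (nhds a₀) :=
  hypersurface_hilbert_a0_eq_a1_general w₁ w₂ w₃ w₄ d I hI hIpos H hH a₀ ha₀
end

section
/- Let $k\geq 5$ be an integer and define $\phi_k(\epsilon)=\frac{2(k+2)^{3}}{(\epsilon-2)^{2}\,k^{2}\,(\epsilon k+4)}$. Then there exists $\epsilon\in(0,2)$ such that $\phi_k(\epsilon) < \phi_k(0) = \frac{(k+2)^{3}}{8k^{2}}$. -/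
/-!
Since `φₖ(ε) = 2(k+2)³ / (k² g(ε))` with `g(ε) = (ε-2)²(εk+4)` and `g(0) = 16`, it suffices to find
`ε ∈ (0,2)` with `g(ε) > 16`. Expanding, `g(ε) - 16 = ε (4(k-4) - 4ε(k-1) + ε²k)`, whose bracket is
positive as soon as `ε(k-1) < k-4`; for `k > 4` the point `ε = 1 - 4/k` qualifies.
-/

open Set

lemma sq_sub_two_mul_add_four_sub_sixteen (ε k : ℝ) :
    (ε - 2) ^ 2 * (ε * k + 4) - 16 = ε * (4 * (k - 4) - 4 * ε * (k - 1) + ε ^ 2 * k) := by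
  ring

lemma sixteen_lt_sq_sub_two_mul_add_four {ε k : ℝ} (hk : 0 ≤ k) (hε : 0 < ε)
    (hεk : ε * (k - 1) < k - 4) : 16 < (ε - 2) ^ 2 * (ε * k + 4) := by
  have hbracket : 0 < 4 * (k - 4) - 4 * ε * (k - 1) + ε ^ 2 * k := by
    nlinarith [mul_nonneg (sq_nonneg ε) hk]
  nlinarith [sq_sub_two_mul_add_four_sub_sixteen ε k, mul_pos hε hbracket]

lemma exists_mem_Ioo_sixteen_lt_sq_sub_two_mul_add_four {k : ℝ} (hk : 4 < k) :
    ∃ ε ∈ Ioo (0 : ℝ) 2, 16 < (ε - 2) ^ 2 * (ε * k + 4) := by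
  have hk₀ : 0 < k := by linarith
  have h4k : 4 / k < 1 := (div_lt_one hk₀).2 hk
  refine ⟨1 - 4 / k, ⟨by linarith, by linarith [div_pos four_pos hk₀]⟩, ?_⟩
  refine sixteen_lt_sq_sub_two_mul_add_four hk₀.le (by linarith) ?_
  have hε : (1 - 4 / k) * (k - 1) = k - 4 - 1 + 4 / k := by field_simp; ring
  linarith

/-- For `k ≥ 5`, the volume function `φₖ(ε) = 2(k+2)³/((ε-2)²k²(εk+4))` attains a value on
`(0,2)` strictly smaller than `φₖ(0) = (k+2)³/(8k²)`: the central fibre destabilizes. -/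
theorem destabilizing_volume_decrease
    (k : ℕ) (hk : 5 ≤ k) (φ : ℝ → ℝ)
    (hφ : ∀ ε : ℝ, φ ε = 2 * ((k : ℝ) + 2) ^ 3 / ((ε - 2) ^ 2 * (k : ℝ) ^ 2 * (ε * (k : ℝ) + 4))) :
    φ 0 = ((k : ℝ) + 2) ^ 3 / (8 * (k : ℝ) ^ 2)
      ∧ ∃ ε ∈ Set.Ioo (0 : ℝ) 2, φ ε < φ 0 := by
  have hk₀ : (0 : ℝ) < k := by exact_mod_cast (by omega : 0 < k)
  refine ⟨by rw [hφ 0]; ring, ?_⟩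
  obtain ⟨ε, hε, hgε⟩ := exists_mem_Ioo_sixteen_lt_sq_sub_two_mul_add_four
    (k := k) (by exact_mod_cast (by omega : 4 < k))
  refine ⟨ε, hε, ?_⟩
  rw [hφ ε, hφ 0]
  apply div_lt_div_of_pos_left (by positivity) (by positivity)
  calc (0 - 2) ^ 2 * (k : ℝ) ^ 2 * (0 * k + 4) = (k : ℝ) ^ 2 * 16 := by ring
    _ < (k : ℝ) ^ 2 * ((ε - 2) ^ 2 * (ε * k + 4)) := by gcongr
    _ = (ε - 2) ^ 2 * (k : ℝ) ^ 2 * (ε * k + 4) := by ring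
end

section
/- Let $w_1,w_2,w_3,w_4$ be positive integers and let $f\in\mathbb{C}[z_1,z_2,z_3,z_4]$ be weighted homogeneous of weighted degree $d$ with respect to the weights $w_i$, such that the partial derivatives $\partial f/\partial z_1,\dots,\partial f/\partial z_4$ form a regular sequence in $\mathbb{C}[z_1,\dots,z_4]$. Assume $w_k + w_l < d$ for all $k\neq l$. If $g_1,\dots,g_4\in\mathbb{C}[z_1,\dots,z_4]$ are weighted homogeneous with $g_k$ of weighted degree $w_k$ and $\sum_{k=1}^{4} g_k\,\frac{\partial f}{\partial z_k} = 0$, then $g_k=0$ for all $k$. -/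
/-!
Eliminate the `gₖ` from the last one down. Once `gₗ = 0` for `l > k`, the syzygy puts
`gₖ ∂ₖf` in the ideal `(∂₀f, …, ∂ₖ₋₁f)`, so regularity of `∂ₖf` modulo that ideal puts `gₖ`
itself there. Each `∂ₗf` is weighted homogeneous of degree `d - wₗ > wₖ`, so every element of
the ideal only has monomials of weight `> wₖ`, while `gₖ` is homogeneous of weight `wₖ`.
-/

open MvPolynomial RingTheory.Sequence

lemma Ideal.ofList_take_ofFn {R : Type*} [Semiring R] {n : ℕ} (r : Fin n → R) (i : Fin n) :
    Ideal.ofList ((List.ofFn r).take i) = Ideal.span (r '' Set.Iio i) := by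
  refine congrArg Ideal.span (Set.ext fun y => ?_)
  simp only [List.mem_take_iff_getElem, List.getElem_ofFn, List.length_ofFn,
    Set.mem_image, Set.mem_Iio]
  exact ⟨fun ⟨j, hj, hy⟩ => ⟨⟨j, by omega⟩, show j < i by omega, hy⟩,
    fun ⟨j, hj, hy⟩ => ⟨j, by change (j : ℕ) < i at hj; omega, hy⟩⟩

namespace RingTheory.Sequence.IsWeaklyRegular

variable {R : Type*} [CommRing R] {n : ℕ} {r : Fin n → R}

lemma mem_span_of_mul_mem (hr : IsWeaklyRegular R (List.ofFn r)) (i : Fin n) {x : R}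
    (hx : x * r i ∈ Ideal.span (r '' Set.Iio i)) : x ∈ Ideal.span (r '' Set.Iio i) := by
  have hreg := hr.regular_mod_prev i (by simp)
  rw [Ideal.ofList_take_ofFn, smul_eq_mul, Ideal.mul_top, List.getElem_ofFn] at hreg
  exact mem_of_isSMulRegular_quotient_of_smul_mem hreg (by rwa [smul_eq_mul, mul_comm])

theorem eq_zero_of_sum_mul_eq_zero (hr : IsWeaklyRegular R (List.ofFn r)) {a : Fin n → R}
    (hsum : ∑ i, a i * r i = 0) (ha : ∀ i, a i ∈ Ideal.span (r '' Set.Iio i) → a i = 0)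
    (i : Fin n) : a i = 0 := by
  induction i using WellFoundedGT.induction with
  | _ i ih =>
  refine ha i (hr.mem_span_of_mul_mem i ?_)
  have hsplit : ∑ j, a j * r j = a i * r i + ∑ j ∈ Finset.Iio i, a j * r j := calc
    ∑ j, a j * r j = ∑ j ∈ Finset.Iic i, a j * r j :=
      (Finset.sum_subset (Finset.subset_univ _) fun j _ hj => by
        rw [ih j (not_le.mp (by simpa using hj)), zero_mul]).symm
    _ = a i * r i + ∑ j ∈ Finset.Iio i, a j * r j := by
      rw [← Finset.Iio_insert, Finset.sum_insert Finset.notMem_Iio_self]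
  have hai : a i * r i = -∑ j ∈ Finset.Iio i, a j * r j :=
    eq_neg_of_add_eq_zero_left (hsplit ▸ hsum)
  rw [hai]
  exact neg_mem <| Ideal.sum_mem _ fun j hj =>
    Ideal.mul_mem_left _ _ (Ideal.subset_span ⟨j, by simpa using hj, rfl⟩)

end RingTheory.Sequence.IsWeaklyRegular

namespace MvPolynomial

variable {R σ : Type*} [CommSemiring R] {w : σ → ℕ} {m n : ℕ} {p : MvPolynomial σ R}

variable (R) in
def highWeightIdeal (w : σ → ℕ) (m : ℕ) : Ideal (MvPolynomial σ R) where
  carrier := {q | ∀ μ, Finsupp.weight w μ ≤ m → coeff μ q = 0}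
  zero_mem' _ _ := coeff_zero _
  add_mem' hp hq μ hμ := by rw [coeff_add, hp μ hμ, hq μ hμ, add_zero]
  smul_mem' c q hq μ hμ := by
    classical
    rw [smul_eq_mul, coeff_mul]
    refine Finset.sum_eq_zero fun ⟨a, b⟩ hab => ?_
    rw [Finset.HasAntidiagonal.mem_antidiagonal] at hab
    rw [hq b (le_trans (by simp [← hab]) hμ), mul_zero]

lemma IsWeightedHomogeneous.mem_highWeightIdeal (hp : p.IsWeightedHomogeneous w n)
    (hmn : m < n) : p ∈ highWeightIdeal R w m := fun μ hμ => by
  by_contra hc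
  exact absurd (hp hc) (by omega)

lemma IsWeightedHomogeneous.eq_zero_of_mem_highWeightIdeal (hp : p.IsWeightedHomogeneous w m)
    (hmem : p ∈ highWeightIdeal R w m) : p = 0 := by
  ext μ
  by_contra hc
  exact hc (hmem μ (hp hc).le)

end MvPolynomial

theorem no_infinitesimal_symmetry_general
    (w : Fin 4 → ℕ) (d : ℕ)
    (f : MvPolynomial (Fin 4) ℂ)
    (hf : f.IsWeightedHomogeneous w d)
    (hreg : RingTheory.Sequence.IsRegular (MvPolynomial (Fin 4) ℂ)
      [MvPolynomial.pderiv 0 f, MvPolynomial.pderiv 1 f,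
       MvPolynomial.pderiv 2 f, MvPolynomial.pderiv 3 f])
    (hwd : ∀ k l : Fin 4, k ≠ l → w k + w l < d)
    (g : Fin 4 → MvPolynomial (Fin 4) ℂ)
    (hg : ∀ k, (g k).IsWeightedHomogeneous w (w k))
    (hsum : ∑ k, g k * MvPolynomial.pderiv k f = 0) :
    ∀ k, g k = 0 := by
  have hreg' : IsWeaklyRegular _ (List.ofFn fun k => pderiv k f) := hreg.toIsWeaklyRegular
  refine hreg'.eq_zero_of_sum_mul_eq_zero hsum fun k hk =>
    (hg k).eq_zero_of_mem_highWeightIdeal (Ideal.span_le.mpr ?_ hk)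
  rintro _ ⟨l, hlk, rfl⟩
  have hkl := hwd k l hlk.ne'
  exact (hf.pderiv (Nat.sub_add_cancel (by omega))).mem_highWeightIdeal (by omega)

/-- Rigidity of quasi-homogeneous isolated singularities: if `f` is weighted homogeneous of
weighted degree `d` with respect to positive weights `w₁,…,w₄` whose partial derivatives form
a regular sequence, and `wₖ + wₗ < d` for all `k ≠ l`, then any weighted-homogeneous syzygy
`∑ₖ gₖ ∂f/∂zₖ = 0` with `gₖ` of weighted degree `wₖ` is trivial. -/
theorem no_infinitesimal_symmetry
    (w : Fin 4 → ℕ) (hw : ∀ k, 0 < w k) (d : ℕ)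
    (f : MvPolynomial (Fin 4) ℂ)
    (hf : f.IsWeightedHomogeneous w d)
    (hreg : RingTheory.Sequence.IsRegular (MvPolynomial (Fin 4) ℂ)
      [MvPolynomial.pderiv 0 f, MvPolynomial.pderiv 1 f,
       MvPolynomial.pderiv 2 f, MvPolynomial.pderiv 3 f])
    (hwd : ∀ k l : Fin 4, k ≠ l → w k + w l < d)
    (g : Fin 4 → MvPolynomial (Fin 4) ℂ)
    (hg : ∀ k, (g k).IsWeightedHomogeneous w (w k))
    (hsum : ∑ k, g k * MvPolynomial.pderiv k f = 0) :
    ∀ k, g k = 0 :=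
  no_infinitesimal_symmetry_general w d f hf hreg hwd g hg hsum
end
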